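/- arXiv:2301.05215 — 4 statements merged into one kernel-verified Lean document; each statement's English description precedes it below -/
import Mathlib

section
/- Let E_{n,k} denote the Lucas-Eulerian polynomials. For all integers n ≥ 0 and 0 ≤ k ≤ n, E_{n,k} = E_{n,n-k} (i.e., the Lucas-Eulerian numbers are palindromic in k). -/
open MvPolynomial

/-- The generalized Lucas polynomials in ℤ[s,t] (s = X 0, t = X 1):
{0} = 0, {1} = 1, {n} = s·{n-1} + t·{n-2}. -/
noncomputable def lucas : ℕ → MvPolynomial (Fin 2) ℤ
  | 0 => 0
  | 1 => 1
  | n + 2 => X 0 * lucas (n + 1) + X 1 * lucas n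

/-- The Lucas-Eulerian polynomials: E_{n,0} = E_{n,n} = 1, E_{n,k} = 0 for k > n,
and E_{n,k} = {k+1}·E_{n-1,k} + {n-k+1}·E_{n-1,k-1} for 1 ≤ k ≤ n-1. -/
noncomputable def lucasEulerian : ℕ → ℕ → MvPolynomial (Fin 2) ℤ
  | _, 0 => 1
  | 0, _ + 1 => 0
  | n + 1, k + 1 =>
    if k + 1 = n + 1 then 1
    else if n + 1 < k + 1 then 0
    else lucas (k + 2) * lucasEulerian n (k + 1)
      + lucas (n + 1 - (k + 1) + 1) * lucasEulerian n k

lemma lucasEulerian_zero (n : ℕ) : lucasEulerian n 0 = 1 := by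
  cases n <;> rfl

lemma lucasEulerian_diag (n : ℕ) : lucasEulerian n n = 1 := by
  cases n with
  | zero => rfl
  | succ m => rw [lucasEulerian, if_pos rfl]

lemma lucasEulerian_rec (n k : ℕ) (h : k + 1 ≤ n) :
    lucasEulerian (n + 1) (k + 1) = lucas (k + 2) * lucasEulerian n (k + 1)
      + lucas (n + 1 - (k + 1) + 1) * lucasEulerian n k := by
  rw [lucasEulerian, if_neg (by omega), if_neg (by omega)]

/-- The Lucas-Eulerian numbers are palindromic: E_{n,k} = E_{n,n-k} for 0 ≤ k ≤ n. -/
theorem lucasEulerian_palindromic (n k : ℕ) (hk : k ≤ n) :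
    lucasEulerian n k = lucasEulerian n (n - k) := by
  induction n generalizing k with
  | zero => interval_cases k; rfl
  | succ m ih =>
    rcases k with _ | j
    · simp [lucasEulerian_zero, lucasEulerian_diag]
    · rcases eq_or_lt_of_le hk with heq | hlt
      · rw [← heq]; simp [lucasEulerian_zero, lucasEulerian_diag]
      · have hj : j + 1 ≤ m := by omega
        obtain ⟨i, hi⟩ : ∃ i, m - j = i + 1 := ⟨m - j - 1, by omega⟩
        have h2 : m + 1 - (j + 1) = i + 1 := by omega
        rw [h2, lucasEulerian_rec m j hj, lucasEulerian_rec m i (by omega)]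
        have e1 : lucasEulerian m (j + 1) = lucasEulerian m i := by
          rw [ih (j + 1) hj, show m - (j + 1) = i by omega]
        have e2 : lucasEulerian m j = lucasEulerian m (i + 1) := by
          rw [ih j (by omega), show m - j = i + 1 from hi]
        rw [e1, e2]
        have h3 : m + 1 - (j + 1) + 1 = i + 2 := by omega
        have h4 : m + 1 - (i + 1) + 1 = j + 2 := by omega
        rw [h3, h4]; ring
end

section
/- Let E_{n,k} denote the Lucas-Eulerian polynomials. For every n ≥ 1, E_{n,1} = Σ_{j=0}^{n} {n-j}·{2}^j, where {2} = s. -/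
open MvPolynomial

/-- For every n ≥ 1, E_{n,1} = Σ_{j=0}^n {n-j}·{2}^j, where {2} = s. -/
theorem lucasEulerian_one (n : ℕ) (hn : 1 ≤ n) :
    lucasEulerian n 1 = ∑ j ∈ Finset.range (n + 1), lucas (n - j) * (X 0 : MvPolynomial (Fin 2) ℤ) ^ j := by
  induction n, hn using Nat.le_induction with
  | base =>
    simp [lucasEulerian, lucas, Finset.sum_range_succ]
  | succ n hn ih =>
    have h1 : lucasEulerian (n + 1) 1 =
        lucas 2 * lucasEulerian n 1 + lucas (n + 1) * lucasEulerian n 0 := by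
      show (if 0 + 1 = n + 1 then (1 : MvPolynomial (Fin 2) ℤ)
        else if n + 1 < 0 + 1 then 0
        else lucas (0 + 2) * lucasEulerian n (0 + 1)
          + lucas (n + 1 - (0 + 1) + 1) * lucasEulerian n 0) = _
      rw [if_neg (by omega : ¬ (0 + 1 = n + 1)), if_neg (by omega : ¬ n + 1 < 0 + 1)]
      norm_num
    have h2 : lucas 2 = (X 0 : MvPolynomial (Fin 2) ℤ) := by
      simp [lucas]
    have hE0 : lucasEulerian n 0 = 1 := by rw [lucasEulerian]
    rw [h1, h2, hE0, ih, mul_one]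
    rw [Finset.sum_range_succ' (fun j => lucas (n + 1 - j) * (X 0 : MvPolynomial (Fin 2) ℤ) ^ j)]
    have : ∀ j, lucas (n + 1 - (j + 1)) = lucas (n - j) := by
      intro j; congr 1; omega
    simp only [this, Nat.sub_zero, pow_zero, mul_one, pow_succ]
    rw [Finset.mul_sum]
    congr 1
    · exact Finset.sum_congr rfl fun x _ => by ring
end

section
/- Define the Motzkin numbers by M_n = Σ_{k=0}^{⌊n/2⌋} C(n,2k)·Cat(k), where Cat(k) is the k-th Catalan number. Then for every integer n ≥ 2, (n+2)·M_n = (2n+1)·M_{n-1} + (3n-3)·M_{n-2}. -/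
/-- The Motzkin numbers M_n = Σ_{k=0}^{⌊n/2⌋} C(n,2k)·Cat(k). -/
def motzkin (n : ℕ) : ℕ :=
  ∑ k ∈ Finset.range (n / 2 + 1), n.choose (2 * k) * catalan k

open Finset Nat

/-- Catalan absorption: (k+2)·Cat(k+1) = 2(2k+1)·Cat(k). -/
lemma cat_abs (k : ℕ) : (k + 2) * catalan (k + 1) = 2 * (2 * k + 1) * catalan k := by
  have h1 : (k + 1 + 1) * catalan (k + 1) = (k + 1).centralBinom :=
    succ_mul_catalan_eq_centralBinom (k + 1)
  have h2 : (k + 1) * Nat.centralBinom (k + 1) = 2 * (2 * k + 1) * Nat.centralBinom k :=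
    Nat.succ_mul_centralBinom_succ k
  have h3 : (k + 1) * catalan k = k.centralBinom := succ_mul_catalan_eq_centralBinom k
  have : (k + 1) * ((k + 2) * catalan (k + 1)) = (k + 1) * (2 * (2 * k + 1) * catalan k) := by
    calc (k + 1) * ((k + 2) * catalan (k + 1)) = (k + 1) * ((k + 1 + 1) * catalan (k + 1)) := by
          ring_nf
      _ = (k + 1) * (k + 1).centralBinom := by rw [h1]
      _ = 2 * (2 * k + 1) * Nat.centralBinom k := h2
      _ = 2 * (2 * k + 1) * ((k + 1) * catalan k) := by rw [h3]
      _ = (k + 1) * (2 * (2 * k + 1) * catalan k) := by ring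
  exact Nat.eq_of_mul_eq_mul_left (Nat.succ_pos k) this

/-- Key binomial identity (Zeilberger certificate). -/
lemma key_binom (m k : ℕ) (hk : 2 * k ≤ m + 2) :
    (m + 2) * (m + 4) * Nat.choose (m + 2) (2 * k)
      + 8 * (k + 1) * (2 * k + 1) * Nat.choose (m + 2) (2 * k + 2)
    = (m + 2) * (2 * m + 5) * Nat.choose (m + 1) (2 * k)
      + 3 * (m + 2) * (m + 1) * Nat.choose m (2 * k)
      + 4 * k * (k + 1) * Nat.choose (m + 2) (2 * k) := by
  rcases Nat.lt_or_ge m (2 * k) with h | h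
  · -- 2k = m+1 or 2k = m+2
    obtain ⟨k', rfl⟩ : ∃ k', k = k' + 1 := ⟨k - 1, by omega⟩
    rcases (show 2 * (k' + 1) = m + 1 ∨ 2 * (k' + 1) = m + 2 by omega) with h1 | h1
    · obtain rfl : m = 2 * k' + 1 := by omega
      rw [show 2 * (k' + 1) = (2 * k' + 2) from by ring,
          show 2 * k' + 1 + 2 = (2 * k' + 2) + 1 from by ring,
          show 2 * k' + 2 + 2 = 2 * k' + 4 from by ring,
          Nat.choose_succ_self_right,
          Nat.choose_eq_zero_of_lt (show (2 * k' + 2) + 1 < 2 * k' + 4 by omega),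
          show 2 * k' + 1 + 1 = 2 * k' + 2 from by ring, Nat.choose_self,
          Nat.choose_eq_zero_of_lt (show 2 * k' + 1 < 2 * k' + 2 by omega)]
      ring
    · obtain rfl : m = 2 * k' := by omega
      rw [show 2 * (k' + 1) = (2 * k') + 2 from by ring,
          Nat.choose_self,
          Nat.choose_eq_zero_of_lt (show 2 * k' + 2 < 2 * k' + 2 + 2 by omega),
          Nat.choose_eq_zero_of_lt (show 2 * k' + 1 < 2 * k' + 2 by omega),
          Nat.choose_eq_zero_of_lt (show 2 * k' < 2 * k' + 2 by omega)]
      ring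
  · -- main case: 2k ≤ m
    obtain ⟨j, rfl⟩ : ∃ j, m = 2 * k + j := ⟨m - 2 * k, by omega⟩
    have h1 : (2 : ℚ) * k + j + 2 - 2 * k = j + 2 := by ring
    qify
    rw [Nat.cast_choose ℚ (show 2 * k ≤ 2 * k + j + 2 by omega),
        Nat.cast_choose ℚ (show 2 * k + 2 ≤ 2 * k + j + 2 by omega),
        Nat.cast_choose ℚ (show 2 * k ≤ 2 * k + j + 1 by omega),
        Nat.cast_choose ℚ (show 2 * k ≤ 2 * k + j by omega)]
    have e1 : 2 * k + j + 2 - 2 * k = j + 2 := by omega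
    have e2 : 2 * k + j + 2 - (2 * k + 2) = j := by omega
    have e3 : 2 * k + j + 1 - 2 * k = j + 1 := by omega
    have e4 : 2 * k + j - 2 * k = j := by omega
    rw [e1, e2, e3, e4]
    have f1 : ((2 * k + j + 2)! : ℚ) = (2 * k + j + 2) * (2 * k + j + 1) * (2 * k + j)! := by
      rw [show 2 * k + j + 2 = (2 * k + j + 1) + 1 from rfl, Nat.factorial_succ,
          show 2 * k + j + 1 = (2 * k + j) + 1 from rfl, Nat.factorial_succ]
      push_cast; ring
    have f2 : ((2 * k + j + 1)! : ℚ) = (2 * k + j + 1) * (2 * k + j)! := by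
      rw [show 2 * k + j + 1 = (2 * k + j) + 1 from rfl, Nat.factorial_succ]; push_cast; ring
    have f3 : ((2 * k + 2)! : ℚ) = (2 * k + 2) * (2 * k + 1) * (2 * k)! := by
      rw [show 2 * k + 2 = (2 * k + 1) + 1 from rfl, Nat.factorial_succ,
          show 2 * k + 1 = (2 * k) + 1 from rfl, Nat.factorial_succ]
      push_cast; ring
    have f4 : ((j + 2)! : ℚ) = (j + 2) * (j + 1) * (j)! := by
      rw [show j + 2 = (j + 1) + 1 from rfl, Nat.factorial_succ, Nat.factorial_succ]
      push_cast; ring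
    have f5 : ((j + 1)! : ℚ) = (j + 1) * (j)! := by
      rw [Nat.factorial_succ]; push_cast; ring
    rw [f1, f2, f3, f4, f5]
    have hj : ((j)! : ℚ) ≠ 0 := by positivity
    have hkk : (((2 * k))! : ℚ) ≠ 0 := by positivity
    field_simp
    ring

/-- Extending the summation range of the Motzkin sum adds only zero terms. -/
lemma motzkin_sum_ext (p a : ℕ) (h : p / 2 ≤ a) :
    ∑ k ∈ Finset.range (a + 1), p.choose (2 * k) * catalan k = motzkin p := by
  rw [motzkin]
  symm
  apply Finset.sum_subset
  · intro x hx
    simp only [Finset.mem_range] at *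
    omega
  · intro x hx hx'
    simp only [Finset.mem_range] at *
    have : p < 2 * x := by omega
    simp [Nat.choose_eq_zero_of_lt this]

/-- For every n ≥ 2, (n+2)·M_n = (2n+1)·M_{n-1} + (3n-3)·M_{n-2}. -/
theorem motzkin_rec (n : ℕ) (hn : 2 ≤ n) :
    (n + 2) * motzkin n = (2 * n + 1) * motzkin (n - 1) + (3 * n - 3) * motzkin (n - 2) := by
  obtain ⟨m, rfl⟩ : ∃ m, n = m + 2 := ⟨n - 2, by omega⟩
  simp only [show m + 2 - 1 = m + 1 from rfl, show m + 2 - 2 = m from rfl,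
    show 3 * (m + 2) - 3 = 3 * m + 3 by omega]
  apply Nat.eq_of_mul_eq_mul_left (show 0 < m + 2 by omega)
  set N := (m + 2) / 2 with hN
  have hM1 : ∑ k ∈ Finset.range (N + 1), (m + 1).choose (2 * k) * catalan k = motzkin (m + 1) :=
    motzkin_sum_ext (m + 1) N (by omega)
  have hM0 : ∑ k ∈ Finset.range (N + 1), m.choose (2 * k) * catalan k = motzkin m :=
    motzkin_sum_ext m N (by omega)
  have hMn : motzkin (m + 2) = ∑ k ∈ Finset.range (N + 1), (m + 2).choose (2 * k) * catalan k :=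
    rfl
  -- telescoping part
  have htel : ∑ k ∈ Finset.range (N + 1),
      4 * (k + 1) * (k + 2) * (m + 2).choose (2 * k + 2) * catalan (k + 1)
      = ∑ k ∈ Finset.range (N + 1), 4 * k * (k + 1) * (m + 2).choose (2 * k) * catalan k := by
    rw [Finset.sum_range_succ, Finset.sum_range_succ']
    have hz1 : (m + 2).choose (2 * N + 2) = 0 := Nat.choose_eq_zero_of_lt (by omega)
    simp only [hz1, Nat.mul_zero, Nat.zero_mul, mul_zero, zero_mul, add_zero, Nat.add_zero]
    apply Finset.sum_congr rfl
    intro k _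
    ring_nf
  -- termwise identity summed
  have hterm : ∀ k ∈ Finset.range (N + 1),
      (m + 2) * (m + 4) * ((m + 2).choose (2 * k) * catalan k)
        + 4 * (k + 1) * (k + 2) * (m + 2).choose (2 * k + 2) * catalan (k + 1)
      = (m + 2) * (2 * m + 5) * ((m + 1).choose (2 * k) * catalan k)
        + 3 * (m + 2) * (m + 1) * (m.choose (2 * k) * catalan k)
        + 4 * k * (k + 1) * (m + 2).choose (2 * k) * catalan k := by
    intro k hk
    simp only [Finset.mem_range] at hk
    have hk2 : 2 * k ≤ m + 2 := by omega
    have habs : 4 * (k + 1) * (k + 2) * (m + 2).choose (2 * k + 2) * catalan (k + 1)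
        = 8 * (k + 1) * (2 * k + 1) * (m + 2).choose (2 * k + 2) * catalan k := by
      have := cat_abs k
      calc 4 * (k + 1) * (k + 2) * (m + 2).choose (2 * k + 2) * catalan (k + 1)
          = 4 * (k + 1) * (m + 2).choose (2 * k + 2) * ((k + 2) * catalan (k + 1)) := by ring
        _ = 4 * (k + 1) * (m + 2).choose (2 * k + 2) * (2 * (2 * k + 1) * catalan k) := by
            rw [this]
        _ = 8 * (k + 1) * (2 * k + 1) * (m + 2).choose (2 * k + 2) * catalan k := by ring
    rw [habs]
    have := key_binom m k hk2
    calc (m + 2) * (m + 4) * ((m + 2).choose (2 * k) * catalan k)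
          + 8 * (k + 1) * (2 * k + 1) * (m + 2).choose (2 * k + 2) * catalan k
        = ((m + 2) * (m + 4) * (m + 2).choose (2 * k)
            + 8 * (k + 1) * (2 * k + 1) * (m + 2).choose (2 * k + 2)) * catalan k := by ring
      _ = ((m + 2) * (2 * m + 5) * Nat.choose (m + 1) (2 * k)
            + 3 * (m + 2) * (m + 1) * Nat.choose m (2 * k)
            + 4 * k * (k + 1) * Nat.choose (m + 2) (2 * k)) * catalan k := by rw [this]
      _ = _ := by ring
  have hsum := Finset.sum_congr rfl hterm
  rw [Finset.sum_add_distrib] at hsum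
  conv at hsum => rw [Finset.sum_add_distrib, Finset.sum_add_distrib]
  rw [htel, ← Finset.mul_sum, ← Finset.mul_sum, ← Finset.mul_sum, hM1, hM0, ← hMn] at hsum
  have h2 := Nat.add_right_cancel hsum
  calc (m + 2) * ((m + 2 + 2) * motzkin (m + 2))
      = (m + 2) * (m + 4) * motzkin (m + 2) := by ring
    _ = (m + 2) * (2 * m + 5) * motzkin (m + 1) + 3 * (m + 2) * (m + 1) * motzkin m := h2
    _ = (m + 2) * ((2 * (m + 2) + 1) * motzkin (m + 1) + (3 * m + 3) * motzkin m) := by ring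
end

section
/- For every integer n ≥ 0, the product of Lucastorials {n}!·{n+1}! divides {2n}! in the polynomial ring ℤ[s,t]; equivalently, the Lucas-Catalan number C_{n} = {2n}!/({n}!·{n+1}!) is a polynomial in s and t. -/
open MvPolynomial

/-- The Lucastorial {n}! = {n}·{n-1}⋯{2}·{1}, with {0}! = 1. -/
noncomputable def lucasFact : ℕ → MvPolynomial (Fin 2) ℤ
  | 0 => 1
  | n + 1 => lucas (n + 1) * lucasFact n

/-!
Put `F = {2n}!` and `D = {n}!·{n+1}!` with `n ≥ 1`. Integrality of the Lucanomials
`{2n}!/({n}!·{n}!)` and `{2n}!/({n+1}!·{n-1}!)` (from the addition formula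
`{m+k+1} = {m+1}{k+1} + t{m}{k}`) says exactly that `D` divides `{n+1}·F` and `{n}·F`.
Cassini's identity `{n}² - {n-1}{n+1} = (-t)^(n-1)` then gives `D ∣ t^(n-1)·F`, and `D` is coprime
to the prime `t` because every `{k}` with `k ≥ 1` takes the value `1` at `s = 1, t = 0`.
-/

theorem lucas_add_two (n : ℕ) : lucas (n + 2) = X 0 * lucas (n + 1) + X 1 * lucas n := rfl

theorem lucasFact_succ (n : ℕ) : lucasFact (n + 1) = lucas (n + 1) * lucasFact n := rfl

theorem lucas_add (m : ℕ) :
    ∀ n, lucas (m + n + 1) = lucas (m + 1) * lucas (n + 1) + X 1 * lucas m * lucas n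
  | 0 => by simp [lucas]
  | 1 => by rw [lucas_add_two m]; simp only [lucas]; ring
  | n + 2 => by
    linear_combination lucas_add_two (m + n + 1) + X 0 * lucas_add m (n + 1)
      + X 1 * lucas_add m n - lucas (m + 1) * lucas_add_two (n + 1)
      - X 1 * lucas m * lucas_add_two n

theorem lucasFact_mul_lucasFact_dvd_lucasFact_add :
    ∀ k l : ℕ, lucasFact k * lucasFact l ∣ lucasFact (k + l)
  | 0, l => by simp [lucasFact]
  | k + 1, 0 => by simp [lucasFact]
  | k + 1, l + 1 => by
    have hk := lucasFact_mul_lucasFact_dvd_lucasFact_add k (l + 1)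
    have hl := lucasFact_mul_lucasFact_dvd_lucasFact_add (k + 1) l
    rw [add_right_comm, add_assoc] at hl
    rw [show k + 1 + (l + 1) = k + (l + 1) + 1 by omega, lucasFact_succ (k + (l + 1)), lucas_add,
      add_mul]
    refine dvd_add ?_ ?_
    · calc lucasFact (k + 1) * lucasFact (l + 1)
          = lucas (k + 1) * (lucasFact k * lucasFact (l + 1)) := by rw [lucasFact_succ k]; ring
        _ ∣ lucas (k + 1) * lucasFact (k + (l + 1)) := mul_dvd_mul_left _ hk
        _ ∣ _ := Dvd.intro (lucas (l + 1 + 1)) (by ring)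
    · calc lucasFact (k + 1) * lucasFact (l + 1)
          = lucas (l + 1) * (lucasFact (k + 1) * lucasFact l) := by rw [lucasFact_succ l]; ring
        _ ∣ lucas (l + 1) * lucasFact (k + (l + 1)) := mul_dvd_mul_left _ hl
        _ ∣ _ := Dvd.intro (X 1 * lucas k) (by ring)

theorem lucas_cassini (n : ℕ) : lucas (n + 1) ^ 2 - lucas n * lucas (n + 2) = (-X 1) ^ n := by
  induction n with
  | zero => simp [lucas]
  | succ n ih =>
    rw [lucas_add_two (n + 1)]
    linear_combination (-X 1) * ih + lucas (n + 2) * lucas_add_two n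

theorem eval_lucas_succ (n : ℕ) : eval ![1, 0] (lucas (n + 1)) = 1 := by
  induction n using Nat.twoStepInduction with
  | zero => simp [lucas]
  | one => simp [lucas]
  | more n _ ih => rw [lucas_add_two]; simp [ih]

theorem eval_lucasFact (n : ℕ) : eval ![1, 0] (lucasFact n) = 1 := by
  induction n with
  | zero => simp [lucasFact]
  | succ n ih => rw [lucasFact_succ, map_mul, ih, eval_lucas_succ, mul_one]

theorem not_X_one_dvd_of_eval_eq_one {a : MvPolynomial (Fin 2) ℤ} (ha : eval ![1, 0] a = 1) :
    ¬ X 1 ∣ a := by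
  rintro ⟨c, rfl⟩
  simp at ha

theorem dvd_of_dvd_lucas_mul {a F : MvPolynomial (Fin 2) ℤ} (n : ℕ) (ha : ¬ X 1 ∣ a)
    (h₁ : a ∣ lucas (n + 1) * F) (h₂ : a ∣ lucas (n + 2) * F) : a ∣ F := by
  have hcop : IsRelPrime a ((-X 1) ^ n) :=
    ((X_prime.neg.irreducible.isRelPrime_iff_not_dvd).2 (by rwa [neg_dvd])).symm.pow_right
  refine hcop.dvd_of_dvd_mul_left ?_
  rw [← lucas_cassini, sub_mul, sq, mul_assoc, mul_assoc]
  exact dvd_sub (dvd_mul_of_dvd_right h₁ _) (dvd_mul_of_dvd_right h₂ _)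

/-- For every n ≥ 0, {n}!·{n+1}! divides {2n}! in ℤ[s,t]; i.e. the Lucas-Catalan number
C_n = {2n}!/({n}!·{n+1}!) is a polynomial in s and t. -/
theorem lucasFact_mul_lucasFact_dvd (n : ℕ) :
    lucasFact n * lucasFact (n + 1) ∣ lucasFact (2 * n) := by
  rcases n with _ | n
  · simp [lucasFact, lucas]
  have hF₁ : lucasFact (n + 1) * lucasFact (n + 1) ∣ lucasFact (2 * (n + 1)) := by
    rw [two_mul]; exact lucasFact_mul_lucasFact_dvd_lucasFact_add _ _
  have hF₂ : lucasFact (n + 2) * lucasFact n ∣ lucasFact (2 * (n + 1)) := by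
    rw [show 2 * (n + 1) = n + 2 + n by omega]; exact lucasFact_mul_lucasFact_dvd_lucasFact_add _ _
  refine dvd_of_dvd_lucas_mul n (not_X_one_dvd_of_eval_eq_one ?_) ?_ ?_
  · rw [map_mul, eval_lucasFact, eval_lucasFact, mul_one]
  · calc lucasFact (n + 1) * lucasFact (n + 1 + 1)
        = lucas (n + 1) * (lucasFact (n + 2) * lucasFact n) := by simp only [lucasFact_succ]; ring
      _ ∣ _ := mul_dvd_mul_left _ hF₂
  · calc lucasFact (n + 1) * lucasFact (n + 1 + 1)
        = lucas (n + 2) * (lucasFact (n + 1) * lucasFact (n + 1)) := by rw [lucasFact_succ (n + 1)]; ring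
      _ ∣ _ := mul_dvd_mul_left _ hF₁
end
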